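/- arXiv:2402.19461 — 7 statements merged into one kernel-verified Lean document; each statement's English description precedes it below -/
import Mathlib

section
/- Every torsion-free virtually cyclic group is cyclic (in particular, infinite cyclic or trivial). -/
/-!
Replace the cyclic subgroup of finite index by its normal core `⟨h⟩`. Conjugation by any `g`
preserves `⟨h⟩`, so it sends `h` to a generator, i.e. to `h` or `h⁻¹`. The case `h ↦ h⁻¹` is
impossible in a torsion-free group, because `g ^ n ∈ ⟨h⟩` for `n = [G : ⟨h⟩]` is then both fixed
and inverted by conjugation by `g`. Hence `⟨h⟩` is central, and the transfer `G → ⟨h⟩`,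
`g ↦ g ^ n`, is a homomorphism whose kernel is trivial by torsion-freeness: `G` embeds into a
cyclic group.
-/

/-- A group is virtually cyclic if it has a cyclic subgroup of finite index. -/
def VirtuallyCyclic (G : Type*) [Group G] : Prop :=
  ∃ H : Subgroup G, IsCyclic H ∧ H.FiniteIndex

open Subgroup

section TransferCentral

variable {G : Type*} [Group G]

theorem conj_eq_self_of_conj_mem_center {x g : G} (hx : g⁻¹ * x * g ∈ center G) :
    g⁻¹ * x * g = x :=
  calc g⁻¹ * x * g = g⁻¹ * x * g * g * g⁻¹ := by group
    _ = g * (g⁻¹ * x * g) * g⁻¹ := by rw [← mem_center_iff.mp hx g]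
    _ = x := by group

theorem Subgroup.isMulCommutative_of_le_center {H : Subgroup G} (hH : H ≤ center G) :
    IsMulCommutative H :=
  ⟨⟨fun a b => Subtype.ext (mem_center_iff.mp (hH b.2) a)⟩⟩

open scoped IsMulCommutative in
noncomputable def MonoidHom.transferPowOfLeCenter (H : Subgroup G) [H.FiniteIndex]
    (hH : H ≤ center G) : G →* H :=
  have := isMulCommutative_of_le_center hH
  transfer (id H)

open scoped IsMulCommutative in
theorem MonoidHom.coe_transferPowOfLeCenter_apply (H : Subgroup G) [H.FiniteIndex]
    (hH : H ≤ center G) (g : G) : (transferPowOfLeCenter H hH g : G) = g ^ H.index := by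
  have := isMulCommutative_of_le_center hH
  rw [transferPowOfLeCenter, transfer_eq_pow (id H) g fun _ _ hx =>
    conj_eq_self_of_conj_mem_center (hH hx)]
  rfl

end TransferCentral

section TorsionFree

variable {G : Type*} [Group G] (htf : ∀ g : G, g ≠ 1 → ¬IsOfFinOrder g)
include htf

theorem eq_one_of_pow_eq_one_of_torsionFree {g : G} {n : ℕ} (hn : n ≠ 0) (hg : g ^ n = 1) :
    g = 1 :=
  not_not.mp fun h1 => htf g h1 (isOfFinOrder_iff_pow_eq_one.mpr ⟨n, Nat.pos_of_ne_zero hn, hg⟩)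

theorem eq_one_of_conj_eq_inv_of_pow_mem_zpowers {g h : G} (hconj : g * h * g⁻¹ = h⁻¹) {n : ℕ}
    (hn : n ≠ 0) (hpow : g ^ n ∈ zpowers h) : h = 1 := by
  obtain ⟨j, hj : h ^ j = g ^ n⟩ := hpow
  have hj_inv : h ^ j = (h ^ j)⁻¹ :=
    calc h ^ j = g * g ^ n * g⁻¹ := by rw [hj, ← pow_succ', pow_succ, mul_inv_cancel_right]
      _ = (g * h * g⁻¹) ^ j := by rw [← hj, conj_zpow]
      _ = (h ^ j)⁻¹ := by rw [hconj, inv_zpow]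
  have hhj : h ^ j = 1 :=
    eq_one_of_pow_eq_one_of_torsionFree htf two_ne_zero (by rw [sq]; nth_rw 2 [hj_inv]; group)
  have hg : g = 1 := eq_one_of_pow_eq_one_of_torsionFree htf hn (hj ▸ hhj)
  rw [hg, one_mul, inv_one, mul_one] at hconj
  exact eq_one_of_pow_eq_one_of_torsionFree htf two_ne_zero (by rw [sq]; nth_rw 2 [hconj]; group)

theorem mem_center_of_normal_zpowers {h : G} [(zpowers h).Normal] [(zpowers h).FiniteIndex] :
    h ∈ center G := by
  refine mem_center_iff.mpr fun g => ?_
  suffices hconj : g * h * g⁻¹ = h by rw [← hconj, inv_mul_cancel_right, hconj]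
  by_cases h1 : h = 1
  · rw [h1, mul_one, mul_inv_cancel]
  have hzpowers : zpowers h = zpowers (g * h * g⁻¹) := by
    have := Normal.map_conj_eq (zpowers h) g
    rw [MonoidHom.map_zpowers] at this
    exact this.symm
  rcases (zpowers_eq_zpowers_iff (htf h h1)).mp hzpowers with hfix | hinv
  · exact hfix.symm
  · exact absurd (eq_one_of_conj_eq_inv_of_pow_mem_zpowers htf hinv.symm
      FiniteIndex.index_ne_zero ((zpowers h).pow_index_mem g)) h1

end TorsionFree

/-- Every torsion-free virtually cyclic group is cyclic. -/
theorem stmt_0 (G : Type*) [Group G]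
    (htf : ∀ g : G, g ≠ 1 → ¬ IsOfFinOrder g)
    (hvc : VirtuallyCyclic G) : IsCyclic G := by
  obtain ⟨H, hcyc, hfin⟩ := hvc
  obtain ⟨h, hh⟩ := (H.normalCore.isCyclic_iff_exists_zpowers_eq_top).mp
    (isCyclic_of_le H.normalCore_le)
  have : (zpowers h).Normal := hh ▸ H.normalCore_normal
  have : (zpowers h).FiniteIndex := hh ▸ H.finiteIndex_normalCore
  have hcen : zpowers h ≤ center G := zpowers_le.mpr (mem_center_of_normal_zpowers htf)
  refine isCyclic_of_injective (MonoidHom.transferPowOfLeCenter (zpowers h) hcen) ?_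
  refine (injective_iff_map_eq_one _).mpr fun g hg => ?_
  exact eq_one_of_pow_eq_one_of_torsionFree htf FiniteIndex.index_ne_zero
    (by simpa [MonoidHom.coe_transferPowOfLeCenter_apply] using congrArg Subtype.val hg)
end

section
/- Let G be a group such that the centralizer C_G(g) is virtually cyclic for every g ∈ G \ {1} (G is a VCC group). If G is not virtually cyclic, then G is ICC, i.e. the conjugacy class {h g h^{-1} : h ∈ G} is infinite for every g ∈ G \ {1}. -/
theorem VirtuallyCyclic.of_finiteIndex {G : Type*} [Group G] {K : Subgroup G} [K.FiniteIndex]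
    (hK : VirtuallyCyclic K) : VirtuallyCyclic G := by
  obtain ⟨H, hH, hHK⟩ := hK
  refine ⟨H.map K.subtype, ?_, ⟨?_⟩⟩
  · exact isCyclic_of_surjective _ (H.equivMapOfInjective K.subtype K.subtype_injective).surjective
  · rw [Subgroup.index_map_subtype]
    exact mul_ne_zero hHK.index_ne_zero Subgroup.FiniteIndex.index_ne_zero

theorem setOf_conj_eq_orbit_conjAct {G : Type*} [Group G] (g : G) :
    {x : G | ∃ h : G, x = h * g * h⁻¹} = MulAction.orbit (ConjAct G) g := by
  ext x
  simp only [Set.mem_ofPred_eq, ConjAct.mem_orbit_conjAct, isConj_comm, isConj_iff, eq_comm]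

theorem Subgroup.index_centralizer_singleton {G : Type*} [Group G] (g : G) :
    (centralizer {g}).index = (MulAction.orbit (ConjAct G) g).ncard := by
  rw [centralizer_eq_comap_stabilizer, ← MulAction.index_stabilizer]
  exact index_comap_of_surjective _ ConjAct.toConjAct.surjective

theorem Subgroup.finiteIndex_centralizer_of_finite_orbit {G : Type*} [Group G] {g : G}
    (hg : (MulAction.orbit (ConjAct G) g).Finite) : (centralizer {g}).FiniteIndex := by
  constructor
  rw [index_centralizer_singleton]
  exact ((Set.ncard_pos hg).mpr ⟨g, MulAction.mem_orbit_self g⟩).ne'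

/-- If the centralizer of every nontrivial element of `G` is virtually cyclic (VCC)
and `G` is not virtually cyclic, then `G` is ICC: every nontrivial conjugacy class
is infinite. -/
theorem stmt_2 (G : Type*) [Group G]
    (hvcc : ∀ g : G, g ≠ 1 → VirtuallyCyclic (Subgroup.centralizer {g}))
    (hnvc : ¬ VirtuallyCyclic G) :
    ∀ g : G, g ≠ 1 → {x : G | ∃ h : G, x = h * g * h⁻¹}.Infinite := by
  intro g hg hfinite
  rw [setOf_conj_eq_orbit_conjAct] at hfinite
  have := Subgroup.finiteIndex_centralizer_of_finite_orbit hfinite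
  exact hnvc (hvcc g hg).of_finiteIndex
end

section
/- Let G be a VCC group (the centralizer of every nontrivial element is virtually cyclic) which is not virtually cyclic. Then every normal abelian subgroup of G is trivial. -/
open Subgroup

namespace VirtuallyCyclic

theorem of_injective {H K : Type*} [Group H] [Group K] (f : H →* K) (hf : Function.Injective f)
    (h : VirtuallyCyclic K) : VirtuallyCyclic H := by
  obtain ⟨C, hC, hCi⟩ := h
  refine ⟨C.comap f, isCyclic_of_injective (f.subgroupComap C) fun x y hxy => ?_, ⟨?_⟩⟩
  · exact Subtype.ext (hf (congrArg Subtype.val hxy))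
  · rw [index_comap]
    exact FiniteIndex.index_ne_zero (H := C.subgroupOf f.range)

theorem of_finiteIndex_s4 {G : Type*} [Group G] {H : Subgroup G} [hH : H.FiniteIndex]
    (h : VirtuallyCyclic H) : VirtuallyCyclic G := by
  obtain ⟨C, hC, hCi⟩ := h
  refine ⟨C.map H.subtype, (equivMapOfInjective C _ H.subtype_injective).isCyclic.mp hC, ⟨?_⟩⟩
  rw [index_map_subtype]
  exact mul_ne_zero hCi.index_ne_zero hH.index_ne_zero

end VirtuallyCyclic

theorem IsCyclic.isMulTorsionFree_of_infinite {C : Type*} [Group C] [IsCyclic C] [Infinite C] :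
    IsMulTorsionFree C :=
  Function.Injective.isMulTorsionFree intCyclicMulEquiv.symm.toMonoidHom
    intCyclicMulEquiv.symm.injective

theorem MulAut.apply_eq_or_eq_inv_of_mem_zpowers {A : Type*} [Group A] {g : A}
    (hg : ¬IsOfFinOrder g) {φ : MulAut A} (hφ : φ g ∈ zpowers g) (hφ' : φ.symm g ∈ zpowers g)
    {b : A} (hb : b ∈ zpowers g) : φ b = b ∨ φ b = b⁻¹ := by
  obtain ⟨k, hk⟩ := mem_zpowers_iff.mp hφ
  obtain ⟨m, hm⟩ := mem_zpowers_iff.mp hφ'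
  obtain ⟨j, rfl⟩ := mem_zpowers_iff.mp hb
  have hkm : k * m = 1 := injective_zpow_iff_not_isOfFinOrder.mpr hg <| by
    calc g ^ (k * m) = φ (g ^ m) := by rw [map_zpow, ← hk, zpow_mul]
      _ = g ^ (1 : ℤ) := by rw [hm, MulEquiv.apply_symm_apply, zpow_one]
  rcases Int.eq_one_or_neg_one_of_mul_eq_one hkm with rfl | rfl
  · left
    rw [map_zpow, ← hk, zpow_one]
  · right
    rw [map_zpow, ← hk, ← zpow_neg, ← zpow_mul, neg_one_mul]

theorem finite_preimage_pow_index {A : Type*} [CommGroup A] {C : Subgroup A} [hC : C.FiniteIndex]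
    [IsMulTorsionFree C] {S : Set A} (hS : S.Finite) : ((· ^ C.index) ⁻¹' S).Finite := by
  have := hS.to_subtype
  let f : ((· ^ C.index) ⁻¹' S) → S × (A ⧸ C) := fun x => (⟨x.1 ^ C.index, x.2⟩, x.1)
  refine Set.finite_coe_iff.mp (Finite.of_injective f fun x y hxy => ?_)
  obtain ⟨hpow, hcoset⟩ := Prod.ext_iff.mp hxy
  have hmem : x.1⁻¹ * y.1 ∈ C := QuotientGroup.eq.mp hcoset
  have htors : (⟨_, hmem⟩ : C) ^ C.index = 1 := by
    ext
    simp only [SubgroupClass.coe_pow, mul_pow, inv_pow, OneMemClass.coe_one]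
    exact inv_mul_eq_one.mpr (congrArg Subtype.val hpow)
  exact Subtype.ext (inv_mul_eq_one.mp (congrArg Subtype.val
    ((pow_eq_one_iff_left hC.index_ne_zero).mp htors)))

theorem VirtuallyCyclic.finite_range_mulAut_apply {A : Type*} [CommGroup A]
    (h : VirtuallyCyclic A) (a : A) : (Set.range fun φ : MulAut A => φ a).Finite := by
  rcases finite_or_infinite A with hA | hA
  · exact Set.toFinite _
  obtain ⟨C, hC, hCi⟩ := h
  have : Infinite C := by
    rw [← not_finite_iff_infinite] at hA ⊢
    exact fun hfin => hA ((finite_iff_finite_and_finiteIndex C).mpr ⟨hfin, hCi⟩)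
  have : IsMulTorsionFree C := IsCyclic.isMulTorsionFree_of_infinite
  set n := C.index
  let B := (powMonoidHom n : A →* A).range
  have hpow_mem : ∀ x : A, x ^ n ∈ B := fun x => ⟨x, rfl⟩
  have hB_stable : ∀ φ : MulAut A, ∀ y ∈ B, φ y ∈ B := by
    rintro φ _ ⟨x, rfl⟩
    simpa only [powMonoidHom_apply, map_pow] using hpow_mem (φ x)
  have hBC : B ≤ C := by
    rintro _ ⟨x, rfl⟩
    exact C.pow_index_mem x
  obtain ⟨g, hg⟩ := (B.isCyclic_iff_exists_zpowers_eq_top).mp (isCyclic_of_le hBC)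
  -- otherwise `A`, the preimage of `B` under `x ↦ xⁿ`, would be finite
  have hg_inf : ¬IsOfFinOrder g := fun hfin => not_finite_iff_infinite.mpr hA <| by
    have := finite_preimage_pow_index (C := C) (hg ▸ finite_zpowers.mpr hfin)
    exact Set.finite_univ_iff.mp (this.subset fun x _ => hpow_mem x)
  have hφ : ∀ φ : MulAut A, φ (a ^ n) = a ^ n ∨ φ (a ^ n) = (a ^ n)⁻¹ := fun φ =>
    MulAut.apply_eq_or_eq_inv_of_mem_zpowers hg_inf (hg ▸ hB_stable φ g (hg ▸ mem_zpowers g))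
      (hg ▸ hB_stable φ.symm g (hg ▸ mem_zpowers g)) (hg ▸ hpow_mem a)
  refine (finite_preimage_pow_index (C := C) (Set.toFinite {a ^ n, (a ^ n)⁻¹})).subset ?_
  rintro _ ⟨φ, rfl⟩
  simpa only [Set.mem_preimage, map_pow, Set.mem_insert_iff, Set.mem_singleton_iff] using hφ φ

theorem Subgroup.finiteIndex_centralizer_of_finite_range_mulAut {G : Type*} [Group G]
    {N : Subgroup G} [N.Normal] (a : N) (h : (Set.range fun φ : MulAut N => φ a).Finite) :
    (centralizer {(a : G)}).FiniteIndex := by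
  have horbit : (MulAction.orbit (ConjAct G) (a : G)).Finite := by
    refine (h.image Subtype.val).subset ?_
    rintro _ ⟨g, rfl⟩
    exact ⟨_, ⟨MulAut.conjNormal (ConjAct.ofConjAct g), rfl⟩,
      (MulAut.conjNormal_apply _ _).trans (ConjAct.smul_def g a).symm⟩
  have := horbit.to_subtype
  have : Finite (G ⧸ centralizer {(a : G)}) :=
    .of_equiv _ ((MulAction.orbitEquivQuotientStabilizer (ConjAct G) (a : G)).trans
      (quotientEquivOfEq (ConjAct.stabilizer_eq_centralizer (a : G))))
  exact finiteIndex_of_finite_quotient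

/-- If the centralizer of every nontrivial element of `G` is virtually cyclic (VCC)
and `G` is not virtually cyclic, then every normal abelian subgroup of `G` is trivial. -/
theorem stmt_4 (G : Type*) [Group G]
    (hvcc : ∀ g : G, g ≠ 1 → VirtuallyCyclic (Subgroup.centralizer {g}))
    (hnvc : ¬ VirtuallyCyclic G)
    (N : Subgroup G) (hN : N.Normal) (habel : ∀ a ∈ N, ∀ b ∈ N, a * b = b * a) :
    N = ⊥ := by
  by_contra hne
  obtain ⟨a, haN, ha⟩ := N.bot_or_exists_ne_one.resolve_left hne
  have hZ := hvcc a ha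
  have hNZ : N ≤ centralizer {a} := fun b hb =>
    mem_centralizer_singleton_iff.mpr (habel b hb a haN)
  have hNvc : VirtuallyCyclic N := hZ.of_injective (inclusion hNZ) (inclusion_injective hNZ)
  let : CommGroup N := { N.toGroup with mul_comm := fun x y => Subtype.ext (habel x x.2 y y.2) }
  have := finiteIndex_centralizer_of_finite_range_mulAut ⟨a, haN⟩ (hNvc.finite_range_mulAut_apply _)
  exact hnvc hZ.of_finiteIndex_s4
end

section
/- Let K, H be groups and γ, γ' : K → H homomorphisms. Suppose F ⊆ H is a finite nonempty set with γ(g) F γ'(g)^{-1} = F for all g ∈ K, and suppose that for every h ∈ H \ {1} the set {γ(g) h γ(g)^{-1} : g ∈ K} is infinite. Then F = {h₀} is a singleton and γ(g) h₀ = h₀ γ'(g) for all g ∈ K; in particular γ and γ' are conjugate in H. -/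
open scoped Pointwise

section TwistedInvariant

variable {K H : Type*} [Group K] [Group H] {γ γ' : K →* H} {F : Set H}

theorem conj_mul_inv_mem_mul_inv_of_mapsTo
    (hF : ∀ g : K, Set.MapsTo (fun x => γ g * x * (γ' g)⁻¹) F F)
    {x y : H} (hx : x ∈ F) (hy : y ∈ F) (g : K) :
    γ g * (x * y⁻¹) * (γ g)⁻¹ ∈ F * F⁻¹ := by
  have hquot : γ g * (x * y⁻¹) * (γ g)⁻¹
      = (γ g * x * (γ' g)⁻¹) * (γ g * y * (γ' g)⁻¹)⁻¹ := by group
  rw [hquot]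
  exact Set.mul_mem_mul (hF g hx) (Set.inv_mem_inv.mpr (hF g hy))

/-- The quotient `x * y⁻¹` has its whole `γ(K)`-conjugation orbit inside the finite set
`F * F⁻¹`, so it must be trivial. -/
theorem eq_of_mem_of_mapsTo (hfin : F.Finite)
    (hF : ∀ g : K, Set.MapsTo (fun x => γ g * x * (γ' g)⁻¹) F F)
    (hcent : ∀ h : H, h ≠ 1 → {x : H | ∃ g : K, x = γ g * h * (γ g)⁻¹}.Infinite)
    {x y : H} (hx : x ∈ F) (hy : y ∈ F) : x = y := by
  by_contra hxy
  refine hcent (x * y⁻¹) (mul_inv_eq_one.not.mpr hxy) ((hfin.mul hfin.inv).subset ?_)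
  rintro _ ⟨g, rfl⟩
  exact conj_mul_inv_mem_mul_inv_of_mapsTo hF hx hy g

end TwistedInvariant

/-- If a finite nonempty subset `F ⊆ H` satisfies `γ(g) F γ'(g)⁻¹ = F` for all `g ∈ K`,
and every nontrivial element of `H` has infinite conjugation orbit under `γ(K)`, then
`F` is a singleton `{h₀}` with `γ(g) h₀ = h₀ γ'(g)` for all `g`; in particular `γ` and
`γ'` are conjugate. -/
theorem stmt_6 (K H : Type*) [Group K] [Group H] (γ γ' : K →* H)
    (F : Finset H) (hne : F.Nonempty)
    (hF : ∀ g : K, (fun x => γ g * x * (γ' g)⁻¹) '' (F : Set H) = (F : Set H))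
    (hcent : ∀ h : H, h ≠ 1 → {x : H | ∃ g : K, x = γ g * h * (γ g)⁻¹}.Infinite) :
    ∃ h₀ : H, (F : Set H) = {h₀} ∧ ∀ g : K, γ g * h₀ = h₀ * γ' g := by
  obtain ⟨h₀, hh₀⟩ := hne
  have hmaps : ∀ g : K, Set.MapsTo (fun x => γ g * x * (γ' g)⁻¹) (F : Set H) F :=
    fun g => Set.mapsTo_iff_image_subset.mpr (hF g).subset
  have hunique : ∀ x ∈ (F : Set H), x = h₀ :=
    fun x hx => eq_of_mem_of_mapsTo F.finite_toSet hmaps hcent hx hh₀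
  refine ⟨h₀, Set.eq_singleton_iff_unique_mem.mpr ⟨hh₀, hunique⟩, fun g => ?_⟩
  exact mul_inv_eq_iff_eq_mul.mp (hunique _ (hmaps g hh₀))
end

section
/- Let S, D be groups, ε, ε' : S → D homomorphisms, and F ⊆ D a finite set such that F ε(h) F ∩ F ε'(h) F ≠ ∅ for every h ∈ S. Assume that for every d ∈ D \ {1} the set {ε(h) d ε(h)^{-1} : h ∈ S} is infinite. Then there exists g ∈ D such that ε(h) = g ε'(h) g^{-1} for every h ∈ S. -/
/-!
Write `ε h = a ε' h b` with `a ∈ F⁻¹F`, `b ∈ FF⁻¹`. All `h` sharing the same pair `(a, b)` lie in one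
left coset of the subgroup where `ε = b⁻¹ ε' b`, so finitely many such cosets cover `S` and, by
B. H. Neumann's lemma, one of these subgroups has finite index. On its normal core `N`, the element
`d = ε k (b⁻¹ ε' k b)⁻¹` is centralized by `ε(N)`, so its `ε(S)`-conjugacy class is finite and
hence `d = 1`.
-/

open scoped Pointwise

section

variable {S D : Type*} [Group S] [Group D]

theorem MonoidHom.finite_setOf_conj_of_finiteIndex (ε : S →* D) {d : D} (K : Subgroup S)
    [K.FiniteIndex] (hK : ∀ n ∈ K, ε n * d * (ε n)⁻¹ = d) :
    {x : D | ∃ h : S, x = ε h * d * (ε h)⁻¹}.Finite := by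
  have hconst : ∀ a b : S, QuotientGroup.leftRel K a b →
      ε a * d * (ε a)⁻¹ = ε b * d * (ε b)⁻¹ := by
    intro a b hab
    rw [QuotientGroup.leftRel_apply] at hab
    calc ε a * d * (ε a)⁻¹
        = ε a * (ε (a⁻¹ * b) * d * (ε (a⁻¹ * b))⁻¹) * (ε a)⁻¹ := by rw [hK _ hab]
      _ = ε b * d * (ε b)⁻¹ := by simp only [map_mul, map_inv]; group
  let conjBy : S ⧸ K → D := Quotient.lift (fun s => ε s * d * (ε s)⁻¹) hconst
  refine (Set.finite_range conjBy).subset ?_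
  rintro x ⟨h, rfl⟩
  exact ⟨QuotientGroup.mk h, rfl⟩

theorem MonoidHom.eq_of_finiteIndex_eqLocus {ε ψ : S →* D} [(ε.eqLocus ψ).FiniteIndex]
    (hcent : ∀ d : D, d ≠ 1 → {x : D | ∃ h : S, x = ε h * d * (ε h)⁻¹}.Infinite) :
    ε = ψ := by
  ext k
  let N := (ε.eqLocus ψ).normalCore
  have hcomm : ∀ n ∈ N, ε n * (ε k * (ψ k)⁻¹) * (ε n)⁻¹ = ε k * (ψ k)⁻¹ := by
    intro n hn
    have hm : k⁻¹ * n * k ∈ N := by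
      simpa using (Subgroup.normalCore_normal _).conj_mem n hn k⁻¹
    have hnk : n * k = k * (k⁻¹ * n * k) := by group
    have hn_eq : ε n = ψ n := Subgroup.normalCore_le _ hn
    have hm_eq : ε (k⁻¹ * n * k) = ψ (k⁻¹ * n * k) := Subgroup.normalCore_le _ hm
    calc ε n * (ε k * (ψ k)⁻¹) * (ε n)⁻¹
        = ε (n * k) * (ψ (n * k))⁻¹ := by rw [map_mul, map_mul, ← hn_eq]; group
      _ = ε k * ε (k⁻¹ * n * k) * (ψ (k⁻¹ * n * k))⁻¹ * (ψ k)⁻¹ := by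
          rw [hnk, map_mul ε k, map_mul ψ k]; group
      _ = ε k * (ψ k)⁻¹ := by rw [hm_eq]; group
  by_contra hne
  exact hcent _ (mul_inv_eq_one.not.mpr hne)
    (ε.finite_setOf_conj_of_finiteIndex N hcomm)

theorem MonoidHom.inv_mul_mem_eqLocus_conj_of_eq_mul_mul {ε ε' : S →* D} {a b : D} {x y : S}
    (hx : ε x = a * ε' x * b) (hy : ε y = a * ε' y * b) :
    y⁻¹ * x ∈ ε.eqLocus ((MulAut.conj b⁻¹).toMonoidHom.comp ε') := by
  change ε (y⁻¹ * x) = b⁻¹ * ε' (y⁻¹ * x) * b⁻¹⁻¹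
  rw [map_mul, map_inv, hx, hy, map_mul, map_inv]
  group

theorem MonoidHom.exists_finiteIndex_eqLocus_conj {ε ε' : S →* D} (T : Finset (D × D))
    (hT : ∀ h : S, ∃ p ∈ T, ε h = p.1 * ε' h * p.2) :
    ∃ g : D, (ε.eqLocus ((MulAut.conj g).toMonoidHom.comp ε')).FiniteIndex := by
  let IsSandwiched (p : D × D) (y : S) : Prop := ε y = p.1 * ε' y * p.2
  let rep (p : D × D) : S := Classical.epsilon (IsSandwiched p)
  have hcover : ⋃ p ∈ T,
      rep p • (ε.eqLocus ((MulAut.conj p.2⁻¹).toMonoidHom.comp ε') : Set S) = Set.univ := by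
    refine Set.eq_univ_of_forall fun h => ?_
    obtain ⟨p, hpT, hp⟩ := hT h
    refine Set.mem_iUnion₂.mpr ⟨p, hpT, mem_leftCoset_iff _ |>.mpr ?_⟩
    exact inv_mul_mem_eqLocus_conj_of_eq_mul_mul hp
      (Classical.epsilon_spec (p := IsSandwiched p) ⟨h, hp⟩)
  obtain ⟨p, -, hp⟩ := Subgroup.exists_finiteIndex_of_leftCoset_cover hcover
  exact ⟨p.2⁻¹, hp⟩

end

/-- If `F ε(h) F ∩ F ε'(h) F ≠ ∅` for every `h ∈ S`, where `F ⊆ D` is finite, and every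
nontrivial element of `D` has infinite conjugation orbit under `ε(S)`, then `ε` and `ε'`
are conjugate homomorphisms. -/
theorem stmt_7 (S D : Type*) [Group S] [Group D] (ε ε' : S →* D)
    (F : Finset D)
    (hF : ∀ h : S, ∃ f₁ ∈ F, ∃ f₂ ∈ F, ∃ f₃ ∈ F, ∃ f₄ ∈ F,
      f₁ * ε h * f₂ = f₃ * ε' h * f₄)
    (hcent : ∀ d : D, d ≠ 1 → {x : D | ∃ h : S, x = ε h * d * (ε h)⁻¹}.Infinite) :
    ∃ g : D, ∀ h : S, ε h = g * ε' h * g⁻¹ := by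
  classical
  have hT : ∀ h : S, ∃ p ∈ (F⁻¹ * F) ×ˢ (F * F⁻¹), ε h = p.1 * ε' h * p.2 := by
    intro h
    obtain ⟨f₁, hf₁, f₂, hf₂, f₃, hf₃, f₄, hf₄, heq⟩ := hF h
    refine ⟨(f₁⁻¹ * f₃, f₄ * f₂⁻¹), Finset.mk_mem_product
      (Finset.mul_mem_mul (Finset.inv_mem_inv hf₁) hf₃)
      (Finset.mul_mem_mul hf₄ (Finset.inv_mem_inv hf₂)), ?_⟩
    calc ε h = f₁⁻¹ * (f₁ * ε h * f₂) * f₂⁻¹ := by group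
      _ = f₁⁻¹ * f₃ * ε' h * (f₄ * f₂⁻¹) := by rw [heq]; group
  obtain ⟨g, _⟩ := MonoidHom.exists_finiteIndex_eqLocus_conj _ hT
  exact ⟨g, DFunLike.congr_fun
    (MonoidHom.eq_of_finiteIndex_eqLocus (ψ := (MulAut.conj g).toMonoidHom.comp ε') hcent)⟩
end

section
/- Let A be a nontrivial abelian group, B a group acting on a set I, and G = (⊕_{i∈I} A) ⋊ B with the shift action. Let g = (f, b) ∈ G with b ≠ 1, and suppose the set {i ∈ I : b·i ≠ i} is infinite. Then the set {a g a^{-1} : a ∈ ⊕_{i∈I} A} is infinite. -/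
/-- The shift action of `B` on the finitely supported functions `I →₀ A`
(written multiplicatively), given by `(b • f)(i) = f(b⁻¹ • i)`. -/
noncomputable def shiftHom (A : Type*) [AddCommGroup A] (B I : Type*) [Group B]
    [MulAction B I] : B →* MulAut (Multiplicative (I →₀ A)) where
  toFun b := AddEquiv.toMultiplicative (Finsupp.domCongr (MulAction.toPerm b))
  map_one' := by
    refine MulEquiv.ext fun f => Multiplicative.toAdd.injective (Finsupp.ext fun i => ?_)
    simp [AddEquiv.toMultiplicative, Finsupp.domCongr, Finsupp.equivMapDomain_apply,
      MulAction.toPerm]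
  map_mul' b₁ b₂ := by
    refine MulEquiv.ext fun f => Multiplicative.toAdd.injective (Finsupp.ext fun i => ?_)
    simp [AddEquiv.toMultiplicative, Finsupp.domCongr, Finsupp.equivMapDomain_apply,
      MulAction.toPerm, mul_smul]



/-!
Conjugating `g = (f, b)` by `δ_i x` (the base element supported at `i` with value `x ≠ 0`)
changes its base part by `δ_i x - δ_{b i} x`, whose value at `i` is `x` whenever `b i ≠ i`.
So a single conjugate arises from such `i` only within the finite support of its difference
with `g`, and infinitely many moved points give infinitely many conjugates. Counting fibres
is needed: when `2 x = 0` the indices `i` and `b i` may give the same conjugate.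
-/

namespace SemidirectProduct

variable {N G : Type*} [Group N] [Group G] {φ : G →* MulAut N}

theorem inl_mul_mul_inl_inv_left (n : N) (g : N ⋊[φ] G) :
    (inl n * g * (inl n)⁻¹).left = n * g.left * φ g.right n⁻¹ := by
  simp [← map_inv]

end SemidirectProduct

section

open SemidirectProduct

variable {A : Type*} [AddCommGroup A] {B I : Type*} [Group B] [MulAction B I]

theorem shiftHom_ofAdd_single (b : B) (i : I) (x : A) :
    shiftHom A B I b (Multiplicative.ofAdd (Finsupp.single i x)) =
      Multiplicative.ofAdd (Finsupp.single (b • i) x) :=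
  congrArg Multiplicative.ofAdd (Finsupp.equivMapDomain_single _ _ _)

noncomputable abbrev baseSingle (B : Type*) [Group B] [MulAction B I] (i : I) (x : A) :
    Multiplicative (I →₀ A) ⋊[shiftHom A B I] B :=
  inl (Multiplicative.ofAdd (Finsupp.single i x))

theorem toAdd_baseSingle_conj_left (g : Multiplicative (I →₀ A) ⋊[shiftHom A B I] B)
    (i : I) (x : A) :
    Multiplicative.toAdd (baseSingle B i x * g * (baseSingle B i x)⁻¹).left =
      Finsupp.single i x + Multiplicative.toAdd g.left - Finsupp.single (g.right • i) x := by
  rw [inl_mul_mul_inl_inv_left, ← ofAdd_neg, ← Finsupp.single_neg, shiftHom_ofAdd_single]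
  simp [sub_eq_add_neg]

theorem finite_setOf_baseSingle_conj_eq {x : A} (hx : x ≠ 0)
    (g y : Multiplicative (I →₀ A) ⋊[shiftHom A B I] B) :
    {i | g.right • i ≠ i ∧ baseSingle B i x * g * (baseSingle B i x)⁻¹ = y}.Finite := by
  refine (Multiplicative.toAdd y.left - Multiplicative.toAdd g.left).support.finite_toSet.subset ?_
  rintro i ⟨hi, rfl⟩
  rw [Finset.mem_coe, Finsupp.mem_support_iff, toAdd_baseSingle_conj_left]
  simpa [Finsupp.single_eq_of_ne' hi] using hx

end

theorem stmt_16_general (A : Type*) [AddCommGroup A] [Nontrivial A] (B I : Type*) [Group B]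
    [MulAction B I]
    (g : SemidirectProduct (Multiplicative (I →₀ A)) B (shiftHom A B I))
    (hmove : {i : I | g.right • i ≠ i}.Infinite) :
    {y : SemidirectProduct (Multiplicative (I →₀ A)) B (shiftHom A B I) |
      ∃ a : SemidirectProduct (Multiplicative (I →₀ A)) B (shiftHom A B I),
        a.right = 1 ∧ y = a * g * a⁻¹}.Infinite := by
  obtain ⟨x, hx⟩ := exists_ne (0 : A)
  let conj (i : I) := baseSingle B i x * g * (baseSingle B i x)⁻¹
  refine fun hfin => hmove (Set.Finite.of_finite_fibers conj (hfin.subset ?_)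
    fun y _ => finite_setOf_baseSingle_conj_eq hx g y)
  rintro _ ⟨i, -, rfl⟩
  exact ⟨_, SemidirectProduct.right_inl _, rfl⟩

/-- In the semidirect product `G = (⊕_{i ∈ I} A) ⋊ B` with the shift action, if
`g = (f, b)` with `b ≠ 1` moving infinitely many coordinates and `A` is nontrivial,
then `g` has infinitely many conjugates by elements of the base `⊕_{i ∈ I} A`. -/
theorem stmt_16 (A : Type*) [AddCommGroup A] [Nontrivial A] (B I : Type*) [Group B]
    [MulAction B I]
    (g : SemidirectProduct (Multiplicative (I →₀ A)) B (shiftHom A B I))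
    (hb : g.right ≠ 1) (hmove : {i : I | g.right • i ≠ i}.Infinite) :
    {y : SemidirectProduct (Multiplicative (I →₀ A)) B (shiftHom A B I) |
      ∃ a : SemidirectProduct (Multiplicative (I →₀ A)) B (shiftHom A B I),
        a.right = 1 ∧ y = a * g * a⁻¹}.Infinite :=
  stmt_16_general A B I g hmove
end

section
/- Let A be a nontrivial abelian group and B a group acting faithfully on a set I such that for every b ∈ B \ {1} the set {i ∈ I : b·i ≠ i} is infinite, and such that every B-orbit on I is infinite. If B is ICC, then the semidirect product G = (⊕_{i∈I} A) ⋊ B (with the shift action) is ICC. -/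
theorem Finsupp.infinite_of_forall_exists_apply_ne {ι M : Type*} [Zero M]
    {S : Set (ι →₀ M)} {T : Set ι} (f₀ : ι →₀ M) (hT : T.Infinite)
    (h : ∀ i ∈ T, ∃ f ∈ S, f i ≠ f₀ i) : S.Infinite := by
  intro hS
  refine hT (((hS.biUnion fun f _ => f.support.finite_toSet).union
    f₀.support.finite_toSet).subset fun i hi => ?_)
  obtain ⟨f, hf, hfi⟩ := h i hi
  by_cases h₀ : f₀ i = 0
  · rw [h₀] at hfi
    exact Or.inl (Set.mem_biUnion hf (Finsupp.mem_support_iff.mpr hfi))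
  · exact Or.inr (Finsupp.mem_support_iff.mpr h₀)

namespace SemidirectProduct

variable {N G : Type*} [Group N] [Group G] {φ : G →* MulAut N}

theorem left_inr_mul_mul_inr_inv (c : G) (g : N ⋊[φ] G) :
    (inr c * g * (inr c)⁻¹).left = φ c g.left := by
  simp [mul_left, inv_left]

theorem left_inl_mul_mul_inl_inv (m : N) (g : N ⋊[φ] G) :
    (inl m * g * (inl m)⁻¹).left = m * g.left * φ g.right m⁻¹ := by
  simp [mul_left, inv_left]

end SemidirectProduct

section Shift

variable {A : Type*} [AddCommGroup A] {B I : Type*} [Group B] [MulAction B I]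

open Multiplicative

theorem toAdd_shiftHom_apply (b : B) (f : Multiplicative (I →₀ A)) (i : I) :
    toAdd (shiftHom A B I b f) i = toAdd f (b⁻¹ • i) := by
  simp [shiftHom, AddEquiv.toMultiplicative, Finsupp.domCongr, Finsupp.equivMapDomain_apply,
    MulAction.toPerm]

theorem toAdd_shiftHom_ofAdd_single (b : B) (i : I) (a : A) :
    toAdd (shiftHom A B I b (ofAdd (Finsupp.single i a))) = Finsupp.single (b • i) a := by
  classical
  ext j
  simp only [toAdd_shiftHom_apply, toAdd_ofAdd, Finsupp.single_apply, eq_inv_smul_iff]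

theorem infinite_range_shiftHom (horb : ∀ x : I, (MulAction.orbit B x).Infinite)
    {f : I →₀ A} (hf : f ≠ 0) :
    (Set.range fun c : B => toAdd (shiftHom A B I c (ofAdd f))).Infinite := by
  obtain ⟨i₀, hi₀⟩ := Finsupp.ne_iff.mp hf
  refine Finsupp.infinite_of_forall_exists_apply_ne 0 (horb i₀) ?_
  rintro _ ⟨c, rfl⟩
  refine ⟨_, ⟨c, rfl⟩, ?_⟩
  simpa [toAdd_shiftHom_apply] using hi₀

theorem infinite_range_add_single_sub_single {b : B} (hmove : {i : I | b • i ≠ i}.Infinite)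
    (n : I →₀ A) {a : A} (ha : a ≠ 0) :
    (Set.range fun i => Finsupp.single i a + n - Finsupp.single (b • i) a).Infinite := by
  refine Finsupp.infinite_of_forall_exists_apply_ne n hmove fun i hi => ⟨_, ⟨i, rfl⟩, ?_⟩
  simpa [Finsupp.single_eq_of_ne' hi] using ha

end Shift

open SemidirectProduct Multiplicative in
theorem stmt_17_general (A : Type*) [AddCommGroup A] [Nontrivial A] (B I : Type*) [Group B]
    [MulAction B I]
    (hmove : ∀ b : B, b ≠ 1 → {i : I | b • i ≠ i}.Infinite)
    (horb : ∀ x : I, (MulAction.orbit B x).Infinite) :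
    ∀ g : SemidirectProduct (Multiplicative (I →₀ A)) B (shiftHom A B I), g ≠ 1 →
      {y : SemidirectProduct (Multiplicative (I →₀ A)) B (shiftHom A B I) |
        ∃ x : SemidirectProduct (Multiplicative (I →₀ A)) B (shiftHom A B I),
          y = x * g * x⁻¹}.Infinite := by
  intro g hg
  refine Set.Infinite.of_image (fun y => toAdd y.left) ?_
  by_cases hb : g.right = 1
  · have hf : toAdd g.left ≠ 0 := fun hf => hg (SemidirectProduct.ext hf hb)
    refine (infinite_range_shiftHom horb hf).mono ?_
    rintro _ ⟨c, rfl⟩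
    exact ⟨_, ⟨inr c, rfl⟩, congrArg toAdd (left_inr_mul_mul_inr_inv c g)⟩
  · obtain ⟨a, ha⟩ := exists_ne (0 : A)
    refine (infinite_range_add_single_sub_single (hmove _ hb) (toAdd g.left) ha).mono ?_
    rintro _ ⟨i, rfl⟩
    refine ⟨_, ⟨inl (ofAdd (Finsupp.single i a)), rfl⟩, ?_⟩
    simp only [left_inl_mul_mul_inl_inv, toAdd_mul, toAdd_ofAdd, map_inv, toAdd_inv,
      toAdd_shiftHom_ofAdd_single, sub_eq_add_neg]

/-- If `A` is a nontrivial abelian group and `B` acts faithfully on `I` with every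
nontrivial element moving infinitely many points and all orbits infinite, and `B` is
ICC, then the semidirect product `G = (⊕_{i ∈ I} A) ⋊ B` with the shift action is ICC. -/
theorem stmt_17 (A : Type*) [AddCommGroup A] [Nontrivial A] (B I : Type*) [Group B]
    [MulAction B I] [FaithfulSMul B I]
    (hmove : ∀ b : B, b ≠ 1 → {i : I | b • i ≠ i}.Infinite)
    (horb : ∀ x : I, (MulAction.orbit B x).Infinite)
    (hicc : ∀ b : B, b ≠ 1 → {x : B | ∃ c : B, x = c * b * c⁻¹}.Infinite) :
    ∀ g : SemidirectProduct (Multiplicative (I →₀ A)) B (shiftHom A B I), g ≠ 1 →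
      {y : SemidirectProduct (Multiplicative (I →₀ A)) B (shiftHom A B I) |
        ∃ x : SemidirectProduct (Multiplicative (I →₀ A)) B (shiftHom A B I),
          y = x * g * x⁻¹}.Infinite :=
  stmt_17_general A B I hmove horb
end
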